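/- arXiv:1306.5031 — 5 statements merged into one kernel-verified Lean document; each statement's English description precedes it below -/
import Mathlib

section
/- Let S and T be operators on functions f : ℕ → ℂ given by (Sf)(n) = (-1)^n ∑_{k=0}^{n} C(n,k)(-1)^k f(n-k) and (Tf)(n) = (-1)^n f(n). Then for every k ≥ 1 and every n, ((ST)^k f)(n) = ∑_{j=0}^{n} C(n,j) k^j f(n-j). -/
open Finset

noncomputable def Sop (f : ℕ → ℂ) : ℕ → ℂ :=
  fun n => (-1) ^ n * ∑ k ∈ range (n + 1), (n.choose k : ℂ) * (-1) ^ k * f (n - k)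

noncomputable def Topf (f : ℕ → ℂ) : ℕ → ℂ := fun n => (-1) ^ n * f n

/-!
`S ∘ T` is the binomial transform `B₁`, where `(B_a g)(n) = ∑_j C(n,j) a^j g(n-j)`.
In exponential generating functions `B_a` is multiplication by `exp (a x)`, so `B_a ∘ B_b = B_{a+b}`
and hence `(S ∘ T)^[k] = B_k`. Combinatorially the semigroup law is the binomial theorem after
regrouping the double sum along `m = j + l` with `C(n,j) C(n-j,l) = C(n,j+l) C(j+l,j)`.
-/

section BinomialShift

variable {R : Type*} [CommSemiring R]

def binomialShift (a : R) (g : ℕ → R) (n : ℕ) : R :=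
  ∑ j ∈ range (n + 1), (n.choose j : R) * a ^ j * g (n - j)

@[simp]
theorem binomialShift_zero : binomialShift (0 : R) = id := by
  funext g n
  simp [binomialShift, sum_range_succ']

theorem binomialShift_comp (a b : R) :
    binomialShift a ∘ binomialShift b = binomialShift (a + b) := by
  funext g n
  calc binomialShift a (binomialShift b g) n
      = ∑ j ∈ range (n + 1), ∑ l ∈ range (n + 1 - j),
          (n.choose j * (n - j).choose l : R) * (a ^ j * b ^ l) * g (n - (j + l)) := by
        refine sum_congr rfl fun j hj => ?_
        rw [binomialShift, mul_sum, Nat.sub_add_comm (mem_range_succ_iff.mp hj)]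
        refine sum_congr rfl fun l _ => ?_
        rw [Nat.sub_sub]
        ring
    _ = ∑ m ∈ range (n + 1), ∑ j ∈ range (m + 1),
          (n.choose m * m.choose j : R) * (a ^ j * b ^ (m - j)) * g (n - m) := by
        rw [← sum_range_diag_flip]
        refine sum_congr rfl fun m _ => sum_congr rfl fun j hj => ?_
        have hjm : j ≤ m := mem_range_succ_iff.mp hj
        rw [Nat.add_sub_cancel' hjm, ← Nat.cast_mul, ← Nat.choose_mul hjm, Nat.cast_mul]
    _ = binomialShift (a + b) g n := by
        refine sum_congr rfl fun m _ => ?_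
        rw [add_pow, mul_sum, sum_mul]
        refine sum_congr rfl fun j _ => ?_
        ring

theorem binomialShift_iterate (a : R) (k : ℕ) :
    (binomialShift a)^[k] = binomialShift (k * a) := by
  induction k with
  | zero => simp
  | succ k ih =>
    rw [Function.iterate_succ', ih, binomialShift_comp]
    push_cast
    ring_nf

end BinomialShift

theorem Sop_comp_Topf : Sop ∘ Topf = binomialShift 1 := by
  funext f n
  simp only [Function.comp_apply, Sop, Topf, binomialShift, one_pow, mul_one, mul_sum]
  refine sum_congr rfl fun j hj => ?_
  have hsign : ((-1 : ℂ) ^ n * (-1) ^ j * (-1) ^ (n - j)) = 1 := by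
    rw [mul_assoc, ← pow_add, Nat.add_sub_cancel' (mem_range_succ_iff.mp hj), ← pow_add,
      ← two_mul, pow_mul, neg_one_sq, one_pow]
  linear_combination (n.choose j * f (n - j) : ℂ) * hsign

theorem ST_iterate_general (f : ℕ → ℂ) (k : ℕ) (n : ℕ) :
    ((Sop ∘ Topf)^[k] f) n = ∑ j ∈ range (n + 1), (n.choose j : ℂ) * (k : ℂ) ^ j * f (n - j) := by
  rw [Sop_comp_Topf, binomialShift_iterate, mul_one, binomialShift]

theorem ST_iterate (f : ℕ → ℂ) (k : ℕ) (hk : 1 ≤ k) (n : ℕ) :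
    ((Sop ∘ Topf)^[k] f) n = ∑ j ∈ range (n + 1), (n.choose j : ℂ) * (k : ℂ) ^ j * f (n - j) :=
  ST_iterate_general f k n
end

section
/- Let p ≥ 2 be an integer. There is no pair (f, g) of complex polynomials, not both zero, such that ∑_{j=0}^{n} C(n,j) (p-2)^j f(n-j) = (-1)^n g(n) for all natural numbers n. -/
open Finset Polynomial

lemma step (q : ℂ) (f g : Polynomial ℂ)
    (h : ∀ n : ℕ, ∑ j ∈ range (n + 1), (n.choose j : ℂ) * q ^ j * f.eval ((n - j : ℕ) : ℂ)
        = (-1) ^ n * g.eval (n : ℂ)) :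
    ∀ n : ℕ, ∑ j ∈ range (n + 1), (n.choose j : ℂ) * q ^ j *
        (f.comp (X + C 1) - f).eval ((n - j : ℕ) : ℂ)
      = (-1) ^ n * (-(g.comp (X + C 1) + C (q + 1) * g)).eval ((n : ℕ) : ℂ) := by
  intro n
  have key : ∑ j ∈ range (n + 1), (n.choose j : ℂ) * q ^ j *
        (f.comp (X + C 1)).eval ((n - j : ℕ) : ℂ)
      = (∑ j ∈ range (n + 1 + 1), (((n+1).choose j : ℕ) : ℂ) * q ^ j *
          f.eval ((n + 1 - j : ℕ) : ℂ))
        - q * ∑ j ∈ range (n + 1), (n.choose j : ℂ) * q ^ j * f.eval ((n - j : ℕ) : ℂ) := by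
    have hL : ∑ j ∈ range (n + 1), (n.choose j : ℂ) * q ^ j *
          (f.comp (X + C 1)).eval ((n - j : ℕ) : ℂ)
        = (∑ j ∈ range n, (n.choose (j+1) : ℂ) * q ^ (j+1) * f.eval ((n - j : ℕ) : ℂ))
          + f.eval ((n + 1 : ℕ) : ℂ) := by
      rw [Finset.sum_range_succ']
      congr 1
      · apply Finset.sum_congr rfl
        intro j hj
        have hj' : j < n := Finset.mem_range.mp hj
        have hcast : ((n - (j+1) : ℕ) : ℂ) + 1 = ((n - j : ℕ) : ℂ) := by
          have : n - (j+1) + 1 = n - j := by omega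
          rw [← this]; push_cast; ring
        simp [Polynomial.eval_comp, hcast]
      · have : ((n - 0 : ℕ) : ℂ) = (n : ℂ) := by norm_num
        simp [Polynomial.eval_comp, this]
    have hR : ∑ j ∈ range (n + 1 + 1), (((n+1).choose j : ℕ) : ℂ) * q ^ j *
          f.eval ((n + 1 - j : ℕ) : ℂ)
        = (∑ j ∈ range (n+1), (n.choose (j+1) : ℂ) * q ^ (j+1) * f.eval ((n - j : ℕ) : ℂ))
          + q * (∑ j ∈ range (n + 1), (n.choose j : ℂ) * q ^ j * f.eval ((n - j : ℕ) : ℂ))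
          + f.eval ((n + 1 : ℕ) : ℂ) := by
      rw [Finset.sum_range_succ']
      have hterm : ∀ j ∈ range (n+1),
          (((n+1).choose (j+1) : ℕ) : ℂ) * q ^ (j+1) * f.eval ((n + 1 - (j+1) : ℕ) : ℂ)
          = (n.choose (j+1) : ℂ) * q ^ (j+1) * f.eval ((n - j : ℕ) : ℂ)
            + (n.choose j : ℂ) * q ^ (j+1) * f.eval ((n - j : ℕ) : ℂ) := by
        intro j hj
        have h1 : n + 1 - (j+1) = n - j := by omega
        rw [h1, Nat.choose_succ_succ]
        push_cast; ring
      rw [Finset.sum_congr rfl hterm, Finset.sum_add_distrib]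
      have h2 : ∑ j ∈ range (n+1), (n.choose j : ℂ) * q ^ (j+1) * f.eval ((n - j : ℕ) : ℂ)
          = q * ∑ j ∈ range (n + 1), (n.choose j : ℂ) * q ^ j * f.eval ((n - j : ℕ) : ℂ) := by
        rw [Finset.mul_sum]; apply Finset.sum_congr rfl; intro j hj; ring
      rw [h2]
      simp
    rw [hL, hR]
    have h3 : ∑ j ∈ range (n+1), (n.choose (j+1) : ℂ) * q ^ (j+1) * f.eval ((n - j : ℕ) : ℂ)
        = ∑ j ∈ range n, (n.choose (j+1) : ℂ) * q ^ (j+1) * f.eval ((n - j : ℕ) : ℂ) := by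
      rw [Finset.sum_range_succ]
      simp [Nat.choose_succ_self]
    rw [h3]; ring
  have hsub : ∑ j ∈ range (n + 1), (n.choose j : ℂ) * q ^ j *
        (f.comp (X + C 1) - f).eval ((n - j : ℕ) : ℂ)
      = (∑ j ∈ range (n + 1), (n.choose j : ℂ) * q ^ j *
          (f.comp (X + C 1)).eval ((n - j : ℕ) : ℂ))
        - ∑ j ∈ range (n + 1), (n.choose j : ℂ) * q ^ j * f.eval ((n - j : ℕ) : ℂ) := by
    rw [← Finset.sum_sub_distrib]
    apply Finset.sum_congr rfl; intro j hj
    simp [Polynomial.eval_sub]; ring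
  rw [hsub, key, h n, h (n+1)]
  simp only [Polynomial.eval_neg, Polynomial.eval_add, Polynomial.eval_mul,
    Polynomial.eval_comp, Polynomial.eval_X, Polynomial.eval_C]
  push_cast
  ring


lemma Gne (q : ℂ) (hq : q + 2 ≠ 0) (g : Polynomial ℂ) (hg : g ≠ 0) :
    -(g.comp (X + C 1) + C (q + 1) * g) ≠ 0 := by
  intro h0
  have hdeg : (g.comp (X + C 1)).natDegree = g.natDegree := by
    simp only [Polynomial.natDegree_comp, Polynomial.natDegree_X_add_C, mul_one]
  have hlc : (g.comp (X + C 1)).leadingCoeff = g.leadingCoeff := by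
    rw [Polynomial.leadingCoeff_comp (by simp only [Polynomial.natDegree_X_add_C]; norm_num)]
    simp only [Polynomial.leadingCoeff_X_add_C, one_pow, mul_one]
  have hco : (-(g.comp (X + C 1) + C (q + 1) * g)).coeff g.natDegree
      = -((q + 2) * g.leadingCoeff) := by
    simp only [Polynomial.coeff_neg, Polynomial.coeff_add, Polynomial.coeff_C_mul]
    have h1 : (g.comp (X + C 1)).coeff g.natDegree = g.leadingCoeff := by
      rw [← hlc, Polynomial.leadingCoeff, hdeg]
    rw [h1, Polynomial.leadingCoeff]
    ring
  rw [h0] at hco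
  simp only [Polynomial.coeff_zero] at hco
  have := mul_ne_zero hq (Polynomial.leadingCoeff_ne_zero.mpr hg)
  rw [Polynomial.leadingCoeff] at this
  have hlc2 : g.leadingCoeff = g.coeff g.natDegree := rfl
  rw [hlc2] at hco
  exact this (by linear_combination hco)


private lemma eval_nat_zero_imp_zero' (g : Polynomial ℂ) (h : ∀ n : ℕ, g.eval (n : ℂ) = 0) :
    g = 0 := by
  refine Polynomial.eq_zero_of_infinite_isRoot g ?_
  have hsub : Set.range (Nat.cast : ℕ → ℂ) ⊆ {x | g.IsRoot x} := by
    rintro _ ⟨n, rfl⟩; exact h n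
  exact Set.Infinite.mono hsub (Set.infinite_range_of_injective Nat.cast_injective)

private lemma main_ind (q : ℂ) (hq : q + 2 ≠ 0) :
    ∀ d : ℕ, ∀ f g : Polynomial ℂ, f.natDegree ≤ d → g ≠ 0 →
      (∀ n : ℕ, ∑ j ∈ range (n + 1), (n.choose j : ℂ) * q ^ j * f.eval ((n - j : ℕ) : ℂ)
        = (-1) ^ n * g.eval (n : ℂ)) → False := by
  intro d
  induction d with
  | zero =>
    intro f g hfd hg h
    -- f is a constant, so the step gives an identity with zero f-part
    obtain ⟨c, rfl⟩ := Polynomial.natDegree_eq_zero.mp (Nat.le_zero.mp hfd)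
    have hΔ : (C c : Polynomial ℂ).comp (X + C 1) - C c = 0 := by
      rw [Polynomial.C_comp]; ring
    have hstep := step q (C c) g h
    rw [hΔ] at hstep
    have hgz : ∀ n : ℕ, (-(g.comp (X + C 1) + C (q + 1) * g)).eval ((n : ℕ) : ℂ) = 0 := by
      intro n
      have := hstep n
      simp only [Polynomial.eval_zero, mul_zero, Finset.sum_const_zero] at this
      have hne : ((-1 : ℂ)) ^ n ≠ 0 := by
        apply pow_ne_zero; norm_num
      exact (mul_eq_zero.mp this.symm).resolve_left hne
    exact Gne q hq g hg (eval_nat_zero_imp_zero' _ hgz)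
  | succ d ih =>
    intro f g hfd hg h
    have hstep := step q f g h
    have hGne := Gne q hq g hg
    rcases eq_or_ne (f.comp (X + C 1) - f) 0 with hΔ | hΔ
    · rw [hΔ] at hstep
      apply hGne
      apply eval_nat_zero_imp_zero'
      intro n
      have := hstep n
      simp only [Polynomial.eval_zero, mul_zero, Finset.sum_const_zero] at this
      have hne : ((-1 : ℂ)) ^ n ≠ 0 := by apply pow_ne_zero; norm_num
      exact (mul_eq_zero.mp this.symm).resolve_left hne
    · -- natDegree of the difference drops
      have hf0 : f ≠ 0 := by
        intro h0; apply hΔ; rw [h0]; simp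
      have hlc : (f.comp (X + C 1)).leadingCoeff = f.leadingCoeff := by
        rw [Polynomial.leadingCoeff_comp (by simp only [Polynomial.natDegree_X_add_C]; norm_num)]
        simp only [Polynomial.leadingCoeff_X_add_C, one_pow, mul_one]
      have hc0 : f.comp (X + C 1) ≠ 0 := by
        intro h0
        apply Polynomial.leadingCoeff_ne_zero.mpr hf0
        rw [← hlc, h0, Polynomial.leadingCoeff_zero]
      have hdeg : (f.comp (X + C 1)).degree = f.degree := by
        rw [Polynomial.degree_eq_natDegree hc0, Polynomial.degree_eq_natDegree hf0]
        simp only [Polynomial.natDegree_comp, Polynomial.natDegree_X_add_C, mul_one]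
      have hlt : (f.comp (X + C 1) - f).degree < f.degree := by
        rw [← hdeg]
        exact Polynomial.degree_sub_lt hdeg hc0 hlc
      have hnd : (f.comp (X + C 1) - f).natDegree < f.natDegree :=
        Polynomial.natDegree_lt_natDegree hΔ hlt
      exact ih (f.comp (X + C 1) - f) (-(g.comp (X + C 1) + C (q + 1) * g))
        (by omega) hGne hstep

theorem no_nonzero_polynomial_pair (p : ℤ) (hp : 2 ≤ p) :
    ¬ ∃ f g : Polynomial ℂ, (f ≠ 0 ∨ g ≠ 0) ∧
      ∀ n : ℕ, ∑ j ∈ range (n + 1), (n.choose j : ℂ) * ((p : ℂ) - 2) ^ j *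
          f.eval ((n - j : ℕ) : ℂ) = (-1) ^ n * g.eval (n : ℂ) := by
  rintro ⟨f, g, hfg, hid⟩
  set q : ℂ := (p : ℂ) - 2 with hqdef
  have hq : q + 2 ≠ 0 := by
    have hp0 : (p : ℂ) ≠ 0 := by
      have : p ≠ 0 := by omega
      exact_mod_cast this
    simpa [hqdef] using hp0
  by_cases hg : g = 0
  · -- then f evaluates to zero at every natural, so f = 0, contradiction
    subst hg
    have hfz : ∀ n : ℕ, f.eval ((n : ℕ) : ℂ) = 0 := by
      intro n
      induction n using Nat.strong_induction_on with
      | _ n ihn =>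
        have h0 := hid n
        simp only [Polynomial.eval_zero, mul_zero] at h0
        rw [Finset.sum_range_succ'] at h0
        have hz : ∀ j ∈ range n,
            ((n.choose (j+1) : ℕ) : ℂ) * q ^ (j+1) * f.eval ((n - (j+1) : ℕ) : ℂ) = 0 := by
          intro j hj
          have hj' : j < n := Finset.mem_range.mp hj
          rw [ihn (n - (j+1)) (by omega)]
          ring
        rw [Finset.sum_congr rfl hz, Finset.sum_const_zero] at h0
        simpa using h0
    have : f = 0 := eval_nat_zero_imp_zero' f hfz
    rcases hfg with hf | hgne
    · exact hf this
    · exact hgne rfl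
  · exact main_ind q hq f.natDegree f g le_rfl hg hid
end

section
/- Let f be a nonzero complex polynomial whose values f(n) have positive real part for all sufficiently large natural numbers n, and let m ≥ 0 be an integer. Then the function n ↦ ∑_{k=0}^{n} C(n,k) m^k f(n-k) is not eventually alternating; in fact for all sufficiently large n its real part is positive. -/
/-!
Dividing by `m ^ n` (for `m > 0`) and reflecting `k ↦ n - k` turns the sum into the binomial
transform `∑ⱼ C(n, j) tⱼ` of `tⱼ = m⁻ʲ · Re f(j)`, which is positive for `j ≥ N₀`.
The finitely many terms with `j < N₀` are `O(n^(N₀-1))`, while the single term `j = N₀` is of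
exact order `n^N₀`, so the transform is eventually positive. For `m = 0` only `k = 0` survives.
-/

open Finset Filter Asymptotics

theorem choose_isLittleO_choose {j k : ℕ} (hjk : j < k) :
    (fun n : ℕ ↦ (n.choose j : ℝ)) =o[atTop] (fun n ↦ (n.choose k : ℝ)) :=
  (isTheta_choose j).trans_isLittleO <|
    ((isLittleO_pow_pow_atTop_of_lt hjk).comp_tendsto tendsto_natCast_atTop_atTop).trans_isTheta
      (isTheta_choose k).symm

theorem eventually_pos_sum_range_choose_mul {t : ℕ → ℝ} (ht : ∀ᶠ j in atTop, 0 < t j) :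
    ∀ᶠ n in atTop, 0 < ∑ j ∈ range (n + 1), (n.choose j : ℝ) * t j := by
  obtain ⟨N₀, hN₀⟩ := eventually_atTop.1 ht
  have hc : 0 < t N₀ := hN₀ N₀ le_rfl
  have hhead : (fun n : ℕ ↦ ∑ j ∈ range N₀, (n.choose j : ℝ) * t j) =o[atTop]
      (fun n ↦ (n.choose N₀ : ℝ)) := by
    refine (IsLittleO.sum (A := fun j n ↦ (n.choose j : ℝ) * t j)
      fun j hj ↦ ?_).congr_left fun n ↦ sum_apply n _ _
    simpa only [mul_comm] using (choose_isLittleO_choose (mem_range.1 hj)).const_mul_left (t j)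
  filter_upwards [hhead.bound (half_pos hc), eventually_ge_atTop N₀] with n hbound hn
  have htail : ∑ j ∈ range N₀, (n.choose j : ℝ) * t j + n.choose N₀ * t N₀ ≤
      ∑ j ∈ range (n + 1), (n.choose j : ℝ) * t j := by
    rw [← sum_range_add_sum_Ico _ (Nat.le_succ_of_le hn)]
    gcongr
    exact single_le_sum (f := fun j ↦ (n.choose j : ℝ) * t j)
      (fun j hj ↦ mul_nonneg (by positivity) (hN₀ j (mem_Ico.1 hj).1).le)
      (mem_Ico.2 ⟨le_rfl, Nat.lt_succ_of_le hn⟩)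
  have hchoose : 0 < (n.choose N₀ : ℝ) := by exact_mod_cast Nat.choose_pos hn
  simp only [Real.norm_eq_abs, Nat.abs_cast, abs_le] at hbound
  linarith [hbound.1, mul_pos (half_pos hc) hchoose]

theorem sum_range_choose_mul_pow_mul_sub {K : Type*} [Field K] {x : K} (hx : x ≠ 0)
    (z : ℕ → K) (n : ℕ) :
    ∑ k ∈ range (n + 1), (n.choose k : K) * x ^ k * z (n - k) =
      x ^ n * ∑ j ∈ range (n + 1), (n.choose j : K) * (x⁻¹ ^ j * z j) := by
  rw [mul_sum, ← sum_range_reflect]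
  refine sum_congr rfl fun j hj ↦ ?_
  have hjn : j ≤ n := Nat.lt_succ_iff.1 (mem_range.1 hj)
  rw [Nat.add_sub_cancel, Nat.sub_sub_self hjn, Nat.choose_symm hjn, pow_sub₀ x hx hjn, inv_pow]
  ring

theorem binomial_sum_eventually_positive_general (f : Polynomial ℂ) (m : ℕ)
    (N₀ : ℕ) (hpos : ∀ n ≥ N₀, 0 < (f.eval (n : ℂ)).re) :
    ∃ N : ℕ, ∀ n ≥ N,
      0 < (∑ k ∈ range (n + 1), (n.choose k : ℂ) * (m : ℂ) ^ k *
        f.eval ((n - k : ℕ) : ℂ)).re := by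
  rw [← eventually_atTop]
  have hre : ∀ n : ℕ, (∑ k ∈ range (n + 1), (n.choose k : ℂ) * (m : ℂ) ^ k *
      f.eval ((n - k : ℕ) : ℂ)).re =
      ∑ k ∈ range (n + 1), (n.choose k : ℝ) * (m : ℝ) ^ k *
        (f.eval ((n - k : ℕ) : ℂ)).re := fun n ↦ by
    simp only [Complex.re_sum, ← Complex.ofReal_natCast, ← Complex.ofReal_pow,
      ← Complex.ofReal_mul, Complex.re_ofReal_mul]
  simp only [hre]
  rcases Nat.eq_zero_or_pos m with rfl | hm
  · filter_upwards [eventually_ge_atTop N₀] with n hn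
    simpa [sum_range_succ'] using hpos n hn
  · have hm' : (0 : ℝ) < m := by exact_mod_cast hm
    filter_upwards [eventually_pos_sum_range_choose_mul
      (t := fun j ↦ (m : ℝ)⁻¹ ^ j * (f.eval (j : ℂ)).re) (eventually_atTop.2
      ⟨N₀, fun j hj ↦ mul_pos (by positivity) (hpos j hj)⟩)] with n hn
    rw [sum_range_choose_mul_pow_mul_sub hm'.ne' (fun j ↦ (f.eval (j : ℂ)).re)]
    exact mul_pos (pow_pos hm' n) hn

theorem binomial_sum_eventually_positive (f : Polynomial ℂ) (hf : f ≠ 0) (m : ℕ)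
    (N₀ : ℕ) (hpos : ∀ n ≥ N₀, 0 < (f.eval (n : ℂ)).re) :
    ∃ N : ℕ, ∀ n ≥ N,
      0 < (∑ k ∈ range (n + 1), (n.choose k : ℂ) * (m : ℂ) ^ k *
        f.eval ((n - k : ℕ) : ℂ)).re :=
  binomial_sum_eventually_positive_general f m N₀ hpos
end

section
/- Let V be a vertex algebra, ξ ∈ V* a linear functional on which every mode of elements u and v acts via the contragredient-style action with truncation: suppose there exists N with u_n ξ = 0, v_n ξ = 0, and u_n v = 0 for all n ≥ N. Then for every integer m, the element u_m v is truncated on ξ: (u_m v)_n ξ = 0 for all sufficiently large n (specifically, for m = N - s with s ≥ 0, (u_{N-s} v)_n ξ = 0 for all n ≥ 2N + s). -/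
open Finset

/-- Truncation of the action of a mode family on a dual vector. -/
def Truncated {V : Type*} [AddCommGroup V] [Module ℂ V]
    (dmode : V → ℤ → Module.Dual ℂ V → Module.Dual ℂ V) (a : V)
    (ξ : Module.Dual ℂ V) : Prop :=
  ∃ K : ℤ, ∀ n : ℤ, K ≤ n → dmode a n ξ = 0

theorem mode_truncated_on_dual
    {V : Type*} [AddCommGroup V] [Module ℂ V]
    (mode : V → ℤ → V → V)
    (dmode : V → ℤ → Module.Dual ℂ V → Module.Dual ℂ V)
    -- Borcherds identity on V*, stated with the (terminating) sums cut off at any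
    -- bounds beyond which the summands vanish:
    (hbor : ∀ (u v : V) (ξ : Module.Dual ℂ V) (m n r : ℤ) (I J : ℕ),
      (∀ i : ℕ, I ≤ i → mode u (r + i) v = 0) →
      (∀ j : ℕ, J ≤ j → dmode v (n + j) ξ = 0 ∧ dmode u (m + j) ξ = 0) →
      ∑ i ∈ range I, (Ring.choose m i : ℂ) • dmode (mode u (r + i) v) (m + n - i) ξ =
        ∑ j ∈ range J, ((-1 : ℂ) ^ j * (Ring.choose r j : ℂ)) •
          (dmode u (r + m - j) (dmode v (n + j) ξ) -
            ((-1 : ℂ) ^ r) • dmode v (r + n - j) (dmode u (m + j) ξ)))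
    (u v : V) (ξ : Module.Dual ℂ V) (N : ℤ)
    (hu : ∀ n : ℤ, N ≤ n → dmode u n ξ = 0)
    (hv : ∀ n : ℤ, N ≤ n → dmode v n ξ = 0)
    (huv : ∀ n : ℤ, N ≤ n → mode u n v = 0) :
    (∀ s : ℕ, ∀ n : ℤ, 2 * N + s ≤ n → dmode (mode u (N - s) v) n ξ = 0) ∧
      (∀ m : ℤ, Truncated dmode (mode u m v) ξ) := by
  have main : ∀ s : ℕ, ∀ n : ℤ, 2 * N + s ≤ n → dmode (mode u (N - s) v) n ξ = 0 := by
    intro s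
    induction s using Nat.strong_induction_on with
    | _ s ih =>
      intro k hk
      have key := hbor u v ξ (k - N) N (N - s) (s + 1) 0
        (by
          intro i hi
          apply huv
          have : (s : ℤ) ≤ i := by exact_mod_cast Nat.le_of_succ_le hi
          linarith)
        (by
          intro j _
          constructor
          · apply hv; have : (0:ℤ) ≤ j := Int.ofNat_nonneg j; linarith
          · apply hu; have : (0:ℤ) ≤ j := Int.ofNat_nonneg j
            have hs : (0:ℤ) ≤ s := Int.ofNat_nonneg s
            linarith)
      rw [Finset.range_zero, Finset.sum_empty, Finset.sum_range_succ'] at key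
      have hzero : ∑ i ∈ range s, (Ring.choose (((k - N : ℤ)) : ℂ) (i + 1)) •
          dmode (mode u (N - s + (i + 1 : ℕ)) v) (k - N + N - (i + 1 : ℕ)) ξ = 0 := by
        apply Finset.sum_eq_zero
        intro i hi
        have hilt : i + 1 ≤ s := Finset.mem_range.mp hi
        have hcast : ((s - (i + 1) : ℕ) : ℤ) = (s : ℤ) - (i + 1 : ℕ) := by
          exact_mod_cast Int.ofNat_sub hilt
        have h1 : N - (s : ℤ) + (i + 1 : ℕ) = N - ((s - (i+1) : ℕ) : ℤ) := by
          rw [hcast]; push_cast; ring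
        have h2 : k - N + N - (i + 1 : ℕ) = k - (i + 1 : ℕ) := by ring
        rw [h1, h2, ih (s - (i+1)) (by omega)]
        · simp
        · rw [hcast]; push_cast; linarith
      rw [hzero, zero_add] at key
      simpa using key
  refine ⟨main, fun m => ?_⟩
  rcases le_or_gt m N with hm | hm
  · refine ⟨2 * N + ((N - m).toNat : ℤ), fun n hn => ?_⟩
    have hNm : ((N - m).toNat : ℤ) = N - m := Int.toNat_of_nonneg (by linarith)
    have := main (N - m).toNat n hn
    rwa [hNm, show N - (N - m) = m by ring] at this
  · refine ⟨2 * N, fun n hn => ?_⟩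
    have h0 := main 0 n (by simpa using hn)
    rw [huv m (le_of_lt hm)]
    rwa [show N - ((0:ℕ):ℤ) = N by simp, huv N le_rfl] at h0
end

section
/- Let p ≥ 2 and suppose f : ℕ → ℂ is a polynomial function that is eventually real-positive (Re f(n) > 0 for large n), and define g(n) = (-1)^n ∑_{j=0}^{n} C(n,j)(p-2)^j f(n-j). If g is also a polynomial function on ℕ, then f = 0 and g = 0. -/
open Finset Polynomial

noncomputable section AuxVanish

private def Ssum (q : ℂ) (F : Polynomial ℂ) (n : ℕ) : ℂ :=
  ∑ j ∈ range (n + 1), (n.choose j : ℂ) * q ^ j * F.eval ((n - j : ℕ) : ℂ)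

private lemma eq_of_eval_nat {A B : Polynomial ℂ}
    (h : ∀ n : ℕ, A.eval (n : ℂ) = B.eval (n : ℂ)) : A = B := by
  apply Polynomial.eq_of_infinite_eval_eq
  apply Set.infinite_of_injective_forall_mem (f := (Nat.cast : ℕ → ℂ)) Nat.cast_injective
  exact h

private lemma Ssum_sub (q : ℂ) (A B : Polynomial ℂ) (n : ℕ) :
    Ssum q (A - B) n = Ssum q A n - Ssum q B n := by
  simp [Ssum, mul_sub, Finset.sum_sub_distrib]

private lemma Ssum_C (q c : ℂ) (n : ℕ) : Ssum q (C c) n = (q + 1) ^ n * c := by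
  rw [Ssum, add_pow, Finset.sum_mul]
  apply Finset.sum_congr rfl
  intro j hj
  simp only [eval_C, one_pow]
  ring

private lemma Ssum_rec (q : ℂ) (F : Polynomial ℂ) (n : ℕ) :
    Ssum q F (n + 1) = Ssum q (F.comp (X + C 1)) n + q * Ssum q F n := by
  have h1 : Ssum q F (n + 1)
      = (∑ j ∈ range (n + 1),
          (((n + 1).choose (j + 1) : ℕ) : ℂ) * q ^ (j + 1) * F.eval ((n - j : ℕ) : ℂ))
        + F.eval (((n + 1 : ℕ)) : ℂ) := by
    rw [Ssum, Finset.sum_range_succ']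
    simp [Nat.succ_sub_succ]
  have h2 : ∀ j ∈ range (n + 1),
      (((n + 1).choose (j + 1) : ℕ) : ℂ) * q ^ (j + 1) * F.eval ((n - j : ℕ) : ℂ)
      = (n.choose j : ℂ) * q ^ (j + 1) * F.eval ((n - j : ℕ) : ℂ)
        + (n.choose (j + 1) : ℂ) * q ^ (j + 1) * F.eval ((n - j : ℕ) : ℂ) := by
    intro j hj
    rw [Nat.choose_succ_succ]
    push_cast
    ring
  have h3 : ∑ j ∈ range (n + 1), (n.choose j : ℂ) * q ^ (j + 1) * F.eval ((n - j : ℕ) : ℂ)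
      = q * Ssum q F n := by
    rw [Ssum, Finset.mul_sum]
    apply Finset.sum_congr rfl
    intro j hj
    ring
  have hL : (∑ j ∈ range (n + 1),
        (n.choose (j + 1) : ℂ) * q ^ (j + 1) * F.eval ((n - j : ℕ) : ℂ))
      = ∑ j ∈ range n, (n.choose (j + 1) : ℂ) * q ^ (j + 1) * F.eval ((n - j : ℕ) : ℂ) := by
    rw [Finset.sum_range_succ]
    simp
  have hR : Ssum q (F.comp (X + C 1)) n
      = (∑ j ∈ range n, (n.choose (j + 1) : ℂ) * q ^ (j + 1) * F.eval ((n - j : ℕ) : ℂ))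
        + F.eval (((n + 1 : ℕ)) : ℂ) := by
    rw [Ssum, Finset.sum_range_succ']
    congr 1
    · apply Finset.sum_congr rfl
      intro j hj
      rw [Finset.mem_range] at hj
      have heval : (F.comp (X + C 1)).eval (((n - (j + 1) : ℕ)) : ℂ)
          = F.eval (((n - (j + 1) : ℕ) : ℂ) + 1) := by simp [eval_comp]
      have hnj : ((n - (j + 1) : ℕ) : ℂ) + 1 = ((n - j : ℕ) : ℂ) := by
        have : (n - (j + 1)) + 1 = n - j := by omega
        rw [← this]; push_cast; ring
      rw [heval, hnj]
    · have heval : (F.comp (X + C 1)).eval ((n : ℕ) : ℂ) = F.eval ((n : ℂ) + 1) := by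
        simp [eval_comp]
      simp only [Nat.choose_zero_right, Nat.cast_one, one_mul, pow_zero, Nat.sub_zero, heval]
      push_cast
      ring
  rw [h1, Finset.sum_congr rfl h2, Finset.sum_add_distrib, h3, hL, hR]
  ring

private lemma base_case (p : ℤ) (hp : 2 ≤ p) (c : ℂ) (G : Polynomial ℂ)
    (hG : ∀ n : ℕ, G.eval (n : ℂ) = (-1) ^ n * Ssum ((p : ℂ) - 2) (C c) n) :
    c = 0 ∧ G = 0 := by
  set r : ℂ := 1 - (p : ℂ) with hr_def
  have hp0 : (p : ℂ) ≠ 0 := by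
    intro h
    have : p = 0 := by exact_mod_cast h
    omega
  have hr : ∀ n : ℕ, G.eval (n : ℂ) = r ^ n * c := by
    intro n
    rw [hG n, Ssum_C, ← mul_assoc, ← mul_pow]
    have : (-1 : ℂ) * ((p : ℂ) - 2 + 1) = r := by rw [hr_def]; ring
    rw [this]
  have hG0 : G = 0 := by
    by_contra hne
    have hcomp : G.comp (X + C 1) = C r * G := by
      apply eq_of_eval_nat
      intro n
      have e1 : (G.comp (X + C 1)).eval (n : ℂ) = G.eval ((n : ℂ) + 1) := by
        simp [eval_comp]
      have e2 : ((n : ℂ) + 1) = (((n + 1 : ℕ)) : ℂ) := by push_cast; ring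
      rw [e1, e2, hr, eval_mul, eval_C, hr]
      ring
    have l1 : (G.comp (X + C 1)).leadingCoeff = G.leadingCoeff := by
      rw [leadingCoeff_comp (by rw [natDegree_X_add_C]; exact one_ne_zero),
        leadingCoeff_X_add_C, one_pow, mul_one]
    have l2 : (C r * G).leadingCoeff = r * G.leadingCoeff := by
      rw [leadingCoeff_mul, leadingCoeff_C]
    have hlc := congrArg leadingCoeff hcomp
    rw [l1, l2] at hlc
    have hmul : (1 - r) * G.leadingCoeff = 0 := by
      linear_combination hlc
    have h1r : (1 : ℂ) - r ≠ 0 := by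
      rw [hr_def]
      intro h
      apply hp0
      linear_combination h
    have : G.leadingCoeff = 0 := by
      rcases mul_eq_zero.mp hmul with h | h
      · exact absurd h h1r
      · exact h
    exact hne (leadingCoeff_eq_zero.mp this)
  have hc : c = 0 := by
    have := hr 0
    rw [hG0] at this
    simpa using this.symm
  exact ⟨hc, hG0⟩

private lemma key (p : ℤ) (hp : 2 ≤ p) :
    ∀ d : ℕ, ∀ F G : Polynomial ℂ, F.natDegree ≤ d →
      (∀ n : ℕ, G.eval (n : ℂ) = (-1) ^ n * Ssum ((p : ℂ) - 2) F n) →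
      F = 0 ∧ G = 0 := by
  intro d
  induction d with
  | zero =>
    intro F G hdeg hG
    have hF : ∃ c, C c = F := Polynomial.natDegree_eq_zero.mp (Nat.le_zero.mp hdeg)
    obtain ⟨c, rfl⟩ := hF
    obtain ⟨hc, hG0⟩ := base_case p hp c G hG
    exact ⟨by rw [hc, map_zero], hG0⟩
  | succ d ih =>
    intro F G hdeg hG
    by_cases hd : F.natDegree ≤ d
    · exact ih F G hd hG
    · exfalso
      have hdegF : F.natDegree = d + 1 := by omega
      have hFne : F ≠ 0 := by
        intro h
        rw [h] at hdegF
        simp at hdegF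
      set F1 := F.comp (X + C 1) with hF1_def
      set Fd := F1 - F with hFd_def
      set G' := -(G.comp (X + C 1)) - C ((p : ℂ) - 1) * G with hG'_def
      have hevalF1 : ∀ x : ℂ, F1.eval x = F.eval (x + 1) := by
        intro x; simp [hF1_def, eval_comp]
      have hdF1 : F1.natDegree = F.natDegree := by
        rw [hF1_def, natDegree_comp, natDegree_X_add_C, mul_one]
      have hG' : ∀ n : ℕ, G'.eval (n : ℂ) = (-1) ^ n * Ssum ((p : ℂ) - 2) Fd n := by
        intro n
        rw [hFd_def, Ssum_sub]
        have hrec : Ssum ((p : ℂ) - 2) F1 n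
            = Ssum ((p : ℂ) - 2) F (n + 1) - ((p : ℂ) - 2) * Ssum ((p : ℂ) - 2) F n := by
          rw [hF1_def]
          linear_combination -(Ssum_rec ((p : ℂ) - 2) F n)
        have e2 : ((n : ℂ) + 1) = (((n + 1 : ℕ)) : ℂ) := by push_cast; ring
        have hGe : G'.eval (n : ℂ)
            = -(G.eval (((n + 1 : ℕ)) : ℂ)) - ((p : ℂ) - 1) * G.eval (n : ℂ) := by
          rw [hG'_def, eval_sub, eval_neg, eval_mul, eval_C, eval_comp, eval_add, eval_X,
            eval_C, e2]
        rw [hGe, hG (n + 1), hG n, hrec, pow_succ]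
        ring
      have hFd_ne : Fd ≠ 0 := by
        intro hFd0
        have hF1F : F1 = F := by rwa [sub_eq_zero] at hFd0
        have hconst : ∀ n : ℕ, F.eval (n : ℂ) = F.eval (0 : ℂ) := by
          intro n
          induction n with
          | zero => simp
          | succ k ihk =>
            have hk : F.eval ((k : ℂ) + 1) = F.eval (k : ℂ) := by
              rw [← hevalF1, hF1F]
            rw [← ihk, ← hk]
            push_cast
            ring_nf
        have hFC : F = C (F.eval 0) := by
          apply eq_of_eval_nat
          intro n
          rw [eval_C]
          simpa using hconst n
        rw [hFC] at hdegF
        simp at hdegF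
      have hF1ne : F1 ≠ 0 := by
        intro h
        rw [h] at hdF1
        simp [hdegF] at hdF1
      have hlcF1 : F1.leadingCoeff = F.leadingCoeff := by
        rw [hF1_def, leadingCoeff_comp (by rw [natDegree_X_add_C]; exact one_ne_zero),
          leadingCoeff_X_add_C, one_pow, mul_one]
      have hdeg_eq : F1.degree = F.degree := by
        rw [degree_eq_natDegree hF1ne, degree_eq_natDegree hFne, hdF1]
      have hlt : Fd.degree < F1.degree := degree_sub_lt hdeg_eq hF1ne hlcF1
      have hFd_le : Fd.natDegree ≤ d := by
        have : Fd.natDegree < F.natDegree := by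
          apply natDegree_lt_natDegree hFd_ne
          rwa [← hdeg_eq]
        omega
      obtain ⟨hFd0, _⟩ := ih Fd G' hFd_le hG'
      exact hFd_ne hFd0

end AuxVanish

theorem polynomial_pair_must_vanish (p : ℤ) (hp : 2 ≤ p) (F G : Polynomial ℂ)
    (hpos : ∃ N : ℕ, ∀ n ≥ N, 0 < (F.eval (n : ℂ)).re)
    (hG : ∀ n : ℕ, G.eval (n : ℂ) =
      (-1) ^ n * ∑ j ∈ range (n + 1), (n.choose j : ℂ) * ((p : ℂ) - 2) ^ j *
        F.eval ((n - j : ℕ) : ℂ)) :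
    F = 0 ∧ G = 0 :=
  key p hp F.natDegree F G le_rfl hG
end
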